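/- Let ξ, λ < ε_{Ω+1} and θ < Ω. If ξ < λ and ξ* < (λ[θ])*, then ξ < λ[θ]. -/

import Mathlib

open Ordinal Set

noncomputable section
open scoped Classical

/-- `Ω`, the first uncountable ordinal. -/
def OmegaO : Ordinal := (Cardinal.aleph 1).ord

/-- `ε_{Ω+1}`, the least `ε > Ω` with `ω ^ ε = ε`. -/
def epsOmega : Ordinal := nfp (fun a => Ordinal.omega0 ^ a) (OmegaO + 1)

lemma omega0_le_OmegaO : Ordinal.omega0 ≤ OmegaO := by
  rw [OmegaO, ← Cardinal.ord_aleph0]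
  exact Cardinal.ord_le_ord.2 (Cardinal.aleph0_le_aleph 1)

lemma one_lt_OmegaO : 1 < OmegaO :=
  lt_of_lt_of_le Ordinal.one_lt_omega0 omega0_le_OmegaO

lemma OmegaO_pos : 0 < OmegaO := lt_trans zero_lt_one one_lt_OmegaO

/-- `ξ*`, the maximal coefficient in the `Ω`-normal form of `ξ`. -/
def star (ξ : Ordinal) : Ordinal :=
  if h0 : ξ = 0 then 0
  else if hl : log OmegaO ξ < ξ then
    max (max (star (log OmegaO ξ)) (star (ξ % OmegaO ^ log OmegaO ξ)))
      (ξ / OmegaO ^ log OmegaO ξ)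
  else 0
termination_by ξ
decreasing_by
  · exact hl
  · exact mod_opow_log_lt_self _ h0

/-- The generalized fundamental sequence `ξ[θ]`. -/
def fs (ξ θ : Ordinal) : Ordinal :=
  if h0 : ξ ≤ 1 then 0
  else if hmod : ξ % OmegaO ^ log OmegaO ξ ≠ 0 then
    OmegaO ^ log OmegaO ξ * (ξ / OmegaO ^ log OmegaO ξ) + fs (ξ % OmegaO ^ log OmegaO ξ) θ
  else if Order.IsSuccLimit (ξ / OmegaO ^ log OmegaO ξ) then OmegaO ^ log OmegaO ξ * θ
  else if hβ : ξ / OmegaO ^ log OmegaO ξ = 1 then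
    (if hlog : Order.IsSuccLimit (log OmegaO ξ) then
       (if hll : log OmegaO ξ < ξ then OmegaO ^ fs (log OmegaO ξ) θ else 0)
     else OmegaO ^ Ordinal.pred (log OmegaO ξ) * θ)
  else
    OmegaO ^ log OmegaO ξ * Ordinal.pred (ξ / OmegaO ^ log OmegaO ξ) + fs (OmegaO ^ log OmegaO ξ) θ
termination_by ξ
decreasing_by
  · exact mod_opow_log_lt_self _ (by intro h; exact h0 (by simp [h]))
  · exact hll
  · -- `Ω ^ log Ω ξ < ξ`
    have hξ0 : ξ ≠ 0 := by intro h; exact h0 (by simp [h])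
    have hle : OmegaO ^ log OmegaO ξ ≤ ξ := opow_log_le_self _ hξ0
    have hpos : 0 < OmegaO ^ log OmegaO ξ :=
      opow_pos _ OmegaO_pos
    have hβ0 : 0 < ξ / OmegaO ^ log OmegaO ξ :=
      Ordinal.div_pos (by positivity) |>.2 hle
    have hβ1 : 1 < ξ / OmegaO ^ log OmegaO ξ :=
      lt_of_le_of_ne (by simpa using Order.add_one_le_of_lt hβ0) (Ne.symm hβ)
    calc OmegaO ^ log OmegaO ξ = OmegaO ^ log OmegaO ξ * 1 := (mul_one _).symm
      _ < OmegaO ^ log OmegaO ξ * (ξ / OmegaO ^ log OmegaO ξ) := by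
          exact mul_lt_mul_of_pos_left hβ1 hpos
      _ ≤ ξ := Ordinal.mul_div_le _ _

/-- The terminal part `τ(ξ)`. -/
def tau (ξ : Ordinal) : Ordinal :=
  if h0 : ξ = 0 then 0
  else if hmod : ξ % OmegaO ^ log OmegaO ξ ≠ 0 then tau (ξ % OmegaO ^ log OmegaO ξ)
  else if Order.IsSuccLimit (ξ / OmegaO ^ log OmegaO ξ) then ξ / OmegaO ^ log OmegaO ξ
  else if log OmegaO ξ = 0 then 1
  else if hlog : Order.IsSuccLimit (log OmegaO ξ) then
    (if hll : log OmegaO ξ < ξ then tau (log OmegaO ξ) else 0)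
  else OmegaO
termination_by ξ
decreasing_by
  · exact mod_opow_log_lt_self _ h0
  · exact hll

/-- The collapsing function `Θ_X`. -/
def ThetaF (X : Set Ordinal) (ξ : Ordinal) : Ordinal :=
  sInf {θ | θ ∈ X ∧ star ξ < θ ∧ ∀ ζ, ζ < ξ → star ζ < θ → ThetaF X ζ < θ}
termination_by ξ
decreasing_by exact by assumption

/-- `Ω_n`: the tower `Ω_0 = 1`, `Ω_{n+1} = Ω ^ Ω_n`. -/
def OmegaTow : ℕ → Ordinal
  | 0 => 1
  | n + 1 => OmegaO ^ OmegaTow n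

/-- `Θ_X(ε_{Ω+1}) = sup_n Θ_X(Ω_n)`. -/
def ThetaEps (X : Set Ordinal) : Ordinal := ⨆ n : ℕ, ThetaF X (OmegaTow n)

/-- `ε̂_{Ω+1}`. -/
def hatEps (X : Set Ordinal) : Set Ordinal :=
  {ξ | ξ < epsOmega ∧ star ξ < ThetaEps X}

/-- `X` is a club in `Ω`. -/
def IsClubBelowOmega (X : Set Ordinal) : Prop :=
  (∀ x ∈ X, x < OmegaO) ∧
  (∀ a, a < OmegaO → ∃ x ∈ X, a < x) ∧
  (∀ S : Set Ordinal, S ⊆ X → S.Nonempty → sSup S < OmegaO → sSup S ∈ X)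

/-- The set of limit points of `X` (below `Ω`). -/
def limitPtsOf (X : Set Ordinal) : Set Ordinal :=
  {x | 0 < x ∧ ∀ y, y < x → ∃ z ∈ X, y < z ∧ z < x}

/-- `FIX(X)`. -/
def FIXs (X : Set Ordinal) : Set Ordinal :=
  {ξ | ξ < epsOmega ∧ star (fs ξ 1) < star ξ ∧ star ξ = tau ξ ∧
    ∃ γ, ξ < γ ∧ γ < epsOmega ∧ star ξ = ThetaF X γ}

/-- `JUMP(X)`. -/
def JUMPs (X : Set Ordinal) : Set Ordinal :=
  {0} ∪ {ξ | ∃ ζ, ξ = ζ + 1} ∪ FIXs X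

/-- `Θ*`. -/
def ThetaStarF (X : Set Ordinal) (ξ : Ordinal) : Ordinal :=
  if ∃ ζ, ξ = ζ + 1 then ThetaF X (Ordinal.pred ξ)
  else if ξ ∈ FIXs X then tau ξ
  else 0

/-- `ξ̌`. -/
def checkF (X : Set Ordinal) (ξ : Ordinal) : Ordinal :=
  if 0 < ThetaStarF X ξ then OmegaO * (ξ / OmegaO) else ξ

/-- `ℙ`, the club of countable additively indecomposable ordinals. -/
def PP : Set Ordinal := {x | x < OmegaO ∧ ∃ a, x = Ordinal.omega0 ^ a}

/-- `1 + Ord`, the club of nonzero countable ordinals. -/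
def oneOrdS : Set Ordinal := {x | 0 < x ∧ x < OmegaO}

/-- `Θ^{(i)}(ξ)`. -/
def ThetaIter (X : Set Ordinal) (ξ : Ordinal) : ℕ → Ordinal
  | 0 => ThetaStarF X ξ
  | n + 1 => ThetaF X (fs (checkF X ξ) (ThetaIter X ξ n))

/-- A Buchholz system of fundamental sequences for `Θ_X`. -/
def IsBuchholz (X : Set Ordinal) (B : Ordinal → ℕ → Ordinal) : Prop :=
  (∀ n, B 0 n = 0) ∧
  (∀ α ξ n, ξ ∈ hatEps X → OmegaO ≤ ξ → tau ξ < OmegaO → ξ = fs α (tau ξ) →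
    B ξ n = fs α (B (tau ξ) n)) ∧
  (∀ ξ n, ξ ∈ hatEps X → 0 < tau (checkF X ξ) → tau (checkF X ξ) < OmegaO →
    B (ThetaF X ξ) n = ThetaF X (B (checkF X ξ) n + ThetaStarF X ξ)) ∧
  (∀ ξ n, ξ ∈ hatEps X → tau (checkF X ξ) = OmegaO →
    B (ThetaF X ξ) n = ThetaIter X ξ n)

/-- The additional clause for the `σ = Θ_{1+Ord}` Buchholz system. -/
def SigmaExtra (B : Ordinal → ℕ → Ordinal) : Prop :=
  ∀ β n, β < OmegaO → B (ThetaF oneOrdS β) n = β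

/-- The additional clauses for the `ϑ = Θ_ℙ` Buchholz system. -/
def VarthetaExtra (B : Ordinal → ℕ → Ordinal) : Prop :=
  (∀ α β n, 0 < β → (∀ α' < α, α' + β < α + β) → B (α + β) n = α + B β n) ∧
  (∀ β n, β < OmegaO → β ∈ JUMPs PP → B (ThetaF PP β) n = ThetaStarF PP β * n)


/-! Write `λ = Ω^a·b + c` in `Ω`-normal form and induct on `λ`. When `λ[θ]` keeps a prefix
`Ω^a·b'` of `λ` and only replaces a tail `μ ≤ Ω^a` by `μ[θ]` (the cases `c ≠ 0` and
`b = b' + 1 > 1`), an ordinal `ξ < λ` above that prefix shares it, so `ξ* < (λ[θ])*` passes to the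
tails and the induction hypothesis for `μ` applies. When `λ[θ] = Ω^a·θ` (`b` a limit, or
`λ = Ω^(a+1)`), an ordinal `Ω^a·θ ≤ ξ < λ` has leading exponent `a` and leading coefficient
at least `θ`, so `ξ* ≥ (λ[θ])*`. When `λ = Ω^a` with `a` a limit, `λ[θ] = Ω^(a[θ])` and the
coefficients give `(log_Ω ξ)* < (a[θ])*`, so the induction hypothesis for `a` gives
`log_Ω ξ < a[θ]`. Below `ε_{Ω+1}` every exponent satisfies `a < Ω^a`, which is what makes the
recursive definitions of `ξ*` and `ξ[θ]` follow the normal form. -/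

section NormalForm

variable {b u v w : Ordinal}

lemma log_opow_mul_add_of_lt (hb : 1 < b) (hv0 : v ≠ 0) (hv : v < b) (hw : w < b ^ u) :
    log b (b ^ u * v + w) = u := by
  rw [log_opow_mul_add hb hv0 hw, log_eq_zero hv, add_zero]

lemma opow_mul_add_div_opow (hw : w < b ^ u) : (b ^ u * v + w) / b ^ u = v := by
  have hb : b ^ u ≠ 0 := (zero_le.trans_lt hw).ne'
  rw [mul_add_div _ hb, div_eq_zero_of_lt hw, add_zero]

lemma opow_mul_add_mod_opow (hw : w < b ^ u) : (b ^ u * v + w) % b ^ u = w := by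
  rw [mul_add_mod_self, mod_eq_of_lt hw]

lemma exists_opow_mul_add (hb : 1 < b) {x : Ordinal} (hx : x ≠ 0) :
    ∃ u v w : Ordinal, x = b ^ u * v + w ∧ v ≠ 0 ∧ v < b ∧ w < b ^ u :=
  ⟨log b x, x / b ^ log b x, x % b ^ log b x, (div_add_mod x _).symm,
    (div_opow_log_pos b hx).ne', div_opow_log_lt x hb,
    mod_lt x (opow_pos _ (zero_lt_one.trans hb)).ne'⟩

end NormalForm

lemma lt_opow_of_lt_epsOmega {a : Ordinal} (h : a < epsOmega) : a < OmegaO ^ a := by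
  by_contra! hle
  have ha0 : a ≠ 0 := by rintro rfl; simp at hle
  have hΩa : OmegaO < a :=
    (left_lt_opow one_lt_OmegaO ((one_lt_opow.2 ⟨one_lt_OmegaO, ha0⟩).trans_le hle)).trans_le hle
  refine h.not_ge (nfp_le_fp (isNormal_opow one_lt_omega0).monotone
    (Order.add_one_le_of_lt hΩa) ?_)
  exact (opow_le_opow_left a omega0_le_OmegaO).trans hle

lemma log_lt_self_of_lt_epsOmega {ξ : Ordinal} (hξ0 : ξ ≠ 0) (hξ : ξ < epsOmega) :
    log OmegaO ξ < ξ :=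
  (lt_opow_of_lt_epsOmega ((log_le_self _ _).trans_lt hξ)).trans_le (opow_log_le_self _ hξ0)

section Star

variable {a v w ξ : Ordinal}

lemma star_of_log_lt (h : log OmegaO ξ < ξ) :
    star ξ = max (max (star (log OmegaO ξ)) (star (ξ % OmegaO ^ log OmegaO ξ)))
      (ξ / OmegaO ^ log OmegaO ξ) := by
  have hξ0 : ξ ≠ 0 := by rintro rfl; simp at h
  rw [star.eq_def, dif_neg hξ0, dif_pos h]

lemma star_of_not_log_lt (h : ¬ log OmegaO ξ < ξ) : star ξ = 0 := by
  rw [star.eq_def]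
  split_ifs <;> rfl

lemma star_zero_ordinal : star (0 : Ordinal) = 0 :=
  star_of_not_log_lt (by simp)

lemma star_opow_mul_add (hv0 : v ≠ 0) (hv : v < OmegaO) (hw : w < OmegaO ^ a)
    (ha : a < OmegaO ^ a) :
    star (OmegaO ^ a * v + w) = max (max (star a) (star w)) v := by
  have hlog := log_opow_mul_add_of_lt one_lt_OmegaO hv0 hv hw
  have hlt : log OmegaO (OmegaO ^ a * v + w) < OmegaO ^ a * v + w := by
    rw [hlog]
    exact ha.trans_le ((Ordinal.le_mul_left _ (pos_iff_ne_zero.2 hv0)).trans le_self_add)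
  rw [star_of_log_lt hlt, hlog, opow_mul_add_div_opow hw, opow_mul_add_mod_opow hw]

lemma star_opow_le (a : Ordinal) : star (OmegaO ^ a) ≤ max (star a) 1 := by
  by_cases ha : a < OmegaO ^ a
  · have h := star_opow_mul_add (w := 0) one_ne_zero one_lt_OmegaO (opow_pos a OmegaO_pos) ha
    rw [mul_one, add_zero] at h
    rw [h, star_zero_ordinal, max_eq_left zero_le]
  · rw [star_of_not_log_lt (by rwa [log_opow one_lt_OmegaO])]
    exact zero_le

end Star

lemma not_isSuccLimit_one : ¬ Order.IsSuccLimit (1 : Ordinal) :=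
  fun h => (one_lt_of_isSuccLimit h).ne rfl

section FundamentalSequence

variable {a b c θ : Ordinal}

lemma fs_opow_mul_add (hb0 : b ≠ 0) (hb : b < OmegaO) (hc0 : c ≠ 0) (hc : c < OmegaO ^ a) :
    fs (OmegaO ^ a * b + c) θ = OmegaO ^ a * b + fs c θ := by
  have h1 : 1 < OmegaO ^ a * b + c :=
    (Order.one_le_iff_ne_zero.2 (mul_ne_zero (opow_pos a OmegaO_pos).ne' hb0)).trans_lt
      (lt_add_of_pos_right _ (pos_iff_ne_zero.2 hc0))
  rw [fs.eq_def, dif_neg h1.not_ge, log_opow_mul_add_of_lt one_lt_OmegaO hb0 hb hc,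
    opow_mul_add_div_opow hc, opow_mul_add_mod_opow hc, dif_pos hc0]

lemma fs_opow_mul_of_isSuccLimit (hb : Order.IsSuccLimit b) (hbΩ : b < OmegaO) :
    fs (OmegaO ^ a * b) θ = OmegaO ^ a * θ := by
  have hA : (0 : Ordinal) < OmegaO ^ a := opow_pos a OmegaO_pos
  have h1 : 1 < OmegaO ^ a * b := (one_lt_of_isSuccLimit hb).trans_le (le_mul_right b hA)
  rw [fs.eq_def, dif_neg h1.not_ge, log_opow_mul one_lt_OmegaO a hb.ne_zero, log_eq_zero hbΩ,
    add_zero, mul_div_cancel _ hA.ne', mul_mod, dif_neg (not_not.2 rfl), if_pos hb]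

lemma fs_opow_mul_add_one (hb0 : b ≠ 0) (hb : b + 1 < OmegaO) :
    fs (OmegaO ^ a * (b + 1)) θ = OmegaO ^ a * b + fs (OmegaO ^ a) θ := by
  have hA : (0 : Ordinal) < OmegaO ^ a := opow_pos a OmegaO_pos
  have h1 : 1 < OmegaO ^ a * (b + 1) :=
    (Order.lt_add_one_iff.2 (Order.one_le_iff_ne_zero.2 hb0)).trans_le (le_mul_right _ hA)
  have hb1 : b + 1 ≠ 1 :=
    fun h => hb0 (Order.succ_injective (by rw [Order.succ_eq_add_one, h]; simp))
  rw [fs.eq_def, dif_neg h1.not_ge, log_opow_mul one_lt_OmegaO a (lt_add_one b).ne_bot,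
    log_eq_zero hb, add_zero, mul_div_cancel _ hA.ne', mul_mod, dif_neg (not_not.2 rfl),
    if_neg (Order.not_isSuccLimit_add_one b), dif_neg hb1, pred_add_one]

lemma fs_opow_add_one (a θ : Ordinal) : fs (OmegaO ^ (a + 1)) θ = OmegaO ^ a * θ := by
  have h1 : 1 < OmegaO ^ (a + 1) := one_lt_opow.2 ⟨one_lt_OmegaO, (lt_add_one a).ne_bot⟩
  rw [fs.eq_def, dif_neg h1.not_ge, log_opow one_lt_OmegaO, div_self (opow_pos _ OmegaO_pos).ne',
    mod_self, dif_neg (not_not.2 rfl), if_neg not_isSuccLimit_one, dif_pos rfl,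
    dif_neg (Order.not_isSuccLimit_add_one a), pred_add_one]

lemma fs_opow_of_isSuccLimit (ha : Order.IsSuccLimit a) (ha' : a < OmegaO ^ a) :
    fs (OmegaO ^ a) θ = OmegaO ^ fs a θ := by
  have h1 : 1 < OmegaO ^ a := one_lt_opow.2 ⟨one_lt_OmegaO, ha.ne_zero⟩
  rw [fs.eq_def, dif_neg h1.not_ge, log_opow one_lt_OmegaO, div_self (opow_pos _ OmegaO_pos).ne',
    mod_self, dif_neg (not_not.2 rfl), if_neg not_isSuccLimit_one, dif_pos rfl, dif_pos ha,
    dif_pos ha']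

end FundamentalSequence

section StarComparison

variable {a v μ ν θ ξ : Ordinal}

lemma lt_opow_mul_add_of_star_lt (ha : a < OmegaO ^ a) (hv0 : v ≠ 0) (hv : v < OmegaO)
    (hμ : μ ≤ OmegaO ^ a) (hξ : ξ < OmegaO ^ a * v + μ)
    (ih : ∀ ζ < μ, star ζ < star ν → ζ < ν)
    (h : star ξ < star (OmegaO ^ a * v + ν)) : ξ < OmegaO ^ a * v + ν := by
  rcases lt_or_ge ξ (OmegaO ^ a * v) with hlt | hge
  · exact hlt.trans_le le_self_add
  obtain ⟨ζ, rfl⟩ : ∃ ζ, ξ = OmegaO ^ a * v + ζ := ⟨_, (Ordinal.add_sub_cancel_of_le hge).symm⟩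
  have hζμ : ζ < μ := (add_lt_add_iff_left _).1 hξ
  have hζ : ζ < OmegaO ^ a := hζμ.trans_le hμ
  rw [add_lt_add_iff_left]
  rcases lt_or_ge ν (OmegaO ^ a) with hν | hν
  · refine ih ζ hζμ (lt_of_not_ge fun hle => h.not_ge ?_)
    rw [star_opow_mul_add hv0 hv hζ ha, star_opow_mul_add hv0 hv hν ha]
    exact max_le_max (max_le_max le_rfl hle) le_rfl
  · exact hζ.trans_le hν

lemma lt_opow_mul_of_star_lt (ha : a < OmegaO ^ a) (hθ : θ < OmegaO)
    (hξ : ξ < OmegaO ^ (a + 1)) (h : star ξ < star (OmegaO ^ a * θ)) : ξ < OmegaO ^ a * θ := by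
  by_contra! hle
  rcases eq_or_ne θ 0 with rfl | hθ0
  · rw [mul_zero, star_zero_ordinal] at h
    exact zero_le.not_gt h
  have hA : OmegaO ^ a ≠ 0 := (opow_pos a OmegaO_pos).ne'
  have hθξ : θ ≤ ξ / OmegaO ^ a := (mul_le_iff_le_div hA).1 hle
  have hv0 : ξ / OmegaO ^ a ≠ 0 := ((pos_iff_ne_zero.2 hθ0).trans_le hθξ).ne'
  have hv : ξ / OmegaO ^ a < OmegaO := (lt_mul_iff_div_lt hA).1 (by simpa [opow_add] using hξ)
  have hstarξ := star_opow_mul_add hv0 hv (mod_lt ξ hA) ha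
  have hstarθ := star_opow_mul_add hθ0 hθ (opow_pos a OmegaO_pos) ha
  rw [div_add_mod] at hstarξ
  rw [add_zero, star_zero_ordinal] at hstarθ
  refine h.not_ge ?_
  rw [hstarξ, hstarθ]
  exact max_le_max (max_le_max le_rfl zero_le) hθξ

lemma lt_opow_of_star_lt (hξε : ξ < epsOmega) (hξ : ξ < OmegaO ^ a)
    (ih : ∀ ζ < a, star ζ < star ν → ζ < ν) (h : star ξ < star (OmegaO ^ ν)) :
    ξ < OmegaO ^ ν := by
  rcases eq_or_ne ξ 0 with rfl | hξ0
  · exact opow_pos ν OmegaO_pos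
  have hstarξ := star_of_log_lt (log_lt_self_of_lt_epsOmega hξ0 hξε)
  have hlog : log OmegaO ξ < a := (lt_opow_iff_log_lt one_lt_OmegaO hξ0).1 hξ
  have hstar : star (log OmegaO ξ) < star ν := by
    refine lt_of_not_ge fun hle => h.not_ge ((star_opow_le ν).trans (max_le ?_ ?_)) <;>
      rw [hstarξ]
    · exact hle.trans ((le_max_left _ _).trans (le_max_left _ _))
    · exact (Order.one_le_iff_ne_zero.2 (div_opow_log_pos _ hξ0).ne').trans (le_max_right _ _)
  calc ξ < OmegaO ^ Order.succ (log OmegaO ξ) := lt_opow_succ_log_self one_lt_OmegaO ξ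
    _ ≤ OmegaO ^ ν := opow_le_opow_right OmegaO_pos (Order.succ_le_of_lt (ih _ hlog hstar))

lemma lt_fs_opow_of_star_lt (hA : OmegaO ^ a < epsOmega) (hθ : θ < OmegaO)
    (hξ : ξ < OmegaO ^ a) (ih : ∀ ζ < a, star ζ < star (fs a θ) → ζ < fs a θ)
    (h : star ξ < star (fs (OmegaO ^ a) θ)) : ξ < fs (OmegaO ^ a) θ := by
  have haε : a < epsOmega := (right_le_opow a one_lt_OmegaO).trans_lt hA
  rcases zero_or_succ_or_isSuccLimit a with rfl | ⟨p, rfl⟩ | hlim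
  · rw [opow_zero, fs.eq_def, dif_pos le_rfl, star_zero_ordinal] at h
    exact absurd h zero_le.not_gt
  · rw [Order.succ_eq_add_one, fs_opow_add_one] at *
    have hp : p < epsOmega := (lt_add_one p).trans haε
    exact lt_opow_mul_of_star_lt (lt_opow_of_lt_epsOmega hp) hθ hξ h
  · rw [fs_opow_of_isSuccLimit hlim (lt_opow_of_lt_epsOmega haε)] at h ⊢
    exact lt_opow_of_star_lt (hξ.trans hA) hξ ih h

end StarComparison

theorem stmt1_general (ξ lam θ : Ordinal) (hlam : lam < epsOmega)
    (hθ : θ < OmegaO) (h1 : ξ < lam) (h2 : star ξ < star (fs lam θ)) :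
    ξ < fs lam θ := by
  induction lam using WellFoundedLT.induction generalizing ξ with
  | _ lam ih =>
  obtain ⟨a, b, c, rfl, hb0, hb, hc⟩ :=
    exists_opow_mul_add one_lt_OmegaO (zero_le.trans_lt h1).ne'
  have hA_le : OmegaO ^ a ≤ OmegaO ^ a * b + c :=
    (le_mul_left _ (pos_iff_ne_zero.2 hb0)).trans le_self_add
  have haε : a < epsOmega := ((right_le_opow a one_lt_OmegaO).trans hA_le).trans_lt hlam
  have ha := lt_opow_of_lt_epsOmega haε
  replace ih : ∀ μ < OmegaO ^ a * b + c, ∀ ζ < μ, star ζ < star (fs μ θ) → ζ < fs μ θ :=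
    fun μ hμ ζ => ih μ hμ ζ (hμ.trans hlam)
  rcases ne_or_eq c 0 with hc0 | rfl
  · rw [fs_opow_mul_add hb0 hb hc0 hc] at h2 ⊢
    exact lt_opow_mul_add_of_star_lt ha hb0 hb hc.le h1 (ih c (hc.trans_le hA_le)) h2
  rw [add_zero] at *
  rcases zero_or_succ_or_isSuccLimit b with rfl | ⟨b, rfl⟩ | hlim
  · exact absurd rfl hb0
  · rw [Order.succ_eq_add_one] at *
    rcases eq_or_ne b 0 with rfl | hb0'
    · rw [zero_add, mul_one] at *
      exact lt_fs_opow_of_star_lt hlam hθ h1 (ih a ha) h2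
    · rw [fs_opow_mul_add_one hb0' hb] at h2 ⊢
      have hA : OmegaO ^ a < OmegaO ^ a * (b + 1) := by
        rw [mul_add_one]
        exact (le_mul_left _ (pos_iff_ne_zero.2 hb0')).trans_lt
          (lt_add_of_pos_right _ (opow_pos a OmegaO_pos))
      exact lt_opow_mul_add_of_star_lt ha hb0' ((lt_add_one b).trans hb) le_rfl
        (by rwa [mul_add_one] at h1) (ih _ hA) h2
  · rw [fs_opow_mul_of_isSuccLimit hlim hb] at h2 ⊢
    exact lt_opow_mul_of_star_lt ha hθ (h1.trans (opow_mul_lt_opow hb (lt_add_one a))) h2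

/-- If `ξ < λ` and `ξ* < (λ[θ])*` then `ξ < λ[θ]`. -/
theorem stmt1 (ξ lam θ : Ordinal) (hξ : ξ < epsOmega) (hlam : lam < epsOmega)
    (hθ : θ < OmegaO) (h1 : ξ < lam) (h2 : star ξ < star (fs lam θ)) :
    ξ < fs lam θ :=
  stmt1_general ξ lam θ hlam hθ h1 h2
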